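/- Let C be a closed subcategory of Mod-B with associated exact preradical r and a = r(B). The category of modules M with M·a = M is equivalent (in fact equal) to C, and the functor M ↦ M ⊗_B a from Mod-B to C, together with Hom_B(a, -) : C → Mod-B, forms an adjoint pair (M ⊗_B a ⊣ Hom_B(a,-)) with M ⊗_B a ≅ M·a naturally. -/

import Mathlib

/-!
Statement 16.  Let `C` be a closed subcategory of the category of (right) `B`-modules
with associated exact preradical `r` and `a = r B`.  The category of modules `M` with
`M·a = M` coincides with `C`, and the functor `M ↦ M ⊗_B a`, together with
`Hom_B(a, -) : C → Mod-B`, forms an adjoint pair with `M ⊗_B a ≅ M·a` naturally.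

Formalized for left modules (the mirror image).  Since Mathlib has no tensor product
over a noncommutative ring, the natural isomorphism `M ⊗_B a ≅ M·a` is expressed by
saying that the canonical map `a ⊗_ℤ M → M`, `x ⊗ m ↦ x • m`, has image `a•M` and
kernel exactly the balancing relations (so the induced map from the balanced tensor
product is an isomorphism onto `a•M`), and the adjunction is expressed via the
canonical bijections `Hom(a•M, M') ≅ Hom(M, Hom_B(a, M'))`.
-/

universe u

open DirectSum TensorProduct

structure ClosedSubcategory (B : Type u) [Ring B] : Type (u + 1) where
  Mem : ∀ (M : Type u) [AddCommGroup M] [Module B M], Prop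
  mem_congr : ∀ {M N : Type u} [AddCommGroup M] [Module B M] [AddCommGroup N] [Module B N],
    (M ≃ₗ[B] N) → Mem M → Mem N
  mem_submodule : ∀ {M : Type u} [AddCommGroup M] [Module B M] (N : Submodule B M),
    Mem M → Mem N
  mem_quotient : ∀ {M : Type u} [AddCommGroup M] [Module B M] (N : Submodule B M),
    Mem M → Mem (M ⧸ N)
  mem_directSum : ∀ {ι : Type u} (M : ι → Type u) [∀ i, AddCommGroup (M i)]
    [∀ i, Module B (M i)], (∀ i, Mem (M i)) → Mem (⨁ i, M i)

variable {B : Type u} [Ring B]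

/-- The submodule `a•M` of `M` (the mirror of `M·a` for right modules). -/
def idealSMul (a : Ideal B) (M : Type u) [AddCommGroup M]
    [Module B M] : Submodule B M :=
  Submodule.span B {z : M | ∃ x ∈ a, ∃ m : M, z = x • m}

/-- `Hom_B(a, M)` as a `B`-module, with action `(b • f) x = f (x * b)`. -/
def THom (a : Ideal B) (_h2 : ∀ x ∈ a, ∀ b : B, x * b ∈ a) (M : Type u) [AddCommGroup M]
    [Module B M] : Type u :=
  ↥a →ₗ[B] M

namespace THom

variable {a : Ideal B} {h2 : ∀ x ∈ a, ∀ b : B, x * b ∈ a} {M : Type u} [AddCommGroup M]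
  [Module B M]

instance : AddCommGroup (THom a h2 M) :=
  inferInstanceAs (AddCommGroup (↥a →ₗ[B] M))

/-- The underlying linear map. -/
def toLin (f : THom a h2 M) : ↥a →ₗ[B] M := f

theorem ext' {f g : THom a h2 M} (h : ∀ x : ↥a, f.toLin x = g.toLin x) : f = g :=
  LinearMap.ext h

def smulAux (b : B) (f : THom a h2 M) : THom a h2 M where
  toFun := fun x => f.toLin ⟨(x : B) * b, h2 x x.2 b⟩
  map_add' := by
    intro x y
    show f.toLin ⟨((x + y : ↥a) : B) * b, h2 _ (x + y).2 b⟩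
        = f.toLin ⟨(x : B) * b, h2 x x.2 b⟩ + f.toLin ⟨(y : B) * b, h2 y y.2 b⟩
    have h : (⟨((x + y : ↥a) : B) * b, h2 _ (x + y).2 b⟩ : ↥a)
        = ⟨(x : B) * b, h2 x x.2 b⟩ + ⟨(y : B) * b, h2 y y.2 b⟩ :=
      Subtype.ext (by simp [add_mul])
    rw [h, map_add]
  map_smul' := by
    intro c x
    show f.toLin ⟨((c • x : ↥a) : B) * b, h2 _ (c • x).2 b⟩
        = (RingHom.id B) c • f.toLin ⟨(x : B) * b, h2 x x.2 b⟩
    have h : (⟨((c • x : ↥a) : B) * b, h2 _ (c • x).2 b⟩ : ↥a)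
        = c • ⟨(x : B) * b, h2 x x.2 b⟩ :=
      Subtype.ext (by simp [mul_assoc, smul_eq_mul])
    rw [h, map_smul]
    rfl

instance : Module B (THom a h2 M) where
  smul := smulAux
  one_smul f := ext' fun x => by
    show f.toLin ⟨(x : B) * 1, _⟩ = f.toLin x
    congr 1
    exact Subtype.ext (by simp)
  mul_smul b c f := ext' fun x => by
    show f.toLin ⟨(x : B) * (b * c), _⟩ = f.toLin ⟨((x : B) * b) * c, _⟩
    congr 1
    exact Subtype.ext (by simp [mul_assoc])
  smul_zero b := ext' fun x => rfl
  smul_add b f g := ext' fun x => rfl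
  add_smul b c f := ext' fun x => by
    show f.toLin ⟨(x : B) * (b + c), _⟩ = f.toLin ⟨(x : B) * b, _⟩ + f.toLin ⟨(x : B) * c, _⟩
    have h : (⟨(x : B) * (b + c), h2 x x.2 (b + c)⟩ : ↥a)
        = ⟨(x : B) * b, h2 x x.2 b⟩ + ⟨(x : B) * c, h2 x x.2 c⟩ :=
      Subtype.ext (by simp [mul_add])
    rw [h, map_add]
  zero_smul f := ext' fun x => by
    show f.toLin ⟨(x : B) * 0, _⟩ = 0
    have h : (⟨(x : B) * 0, h2 x x.2 0⟩ : ↥a) = 0 := Subtype.ext (by simp)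
    rw [h, map_zero]

@[simp] theorem smul_apply (b : B) (f : THom a h2 M) (x : ↥a) :
    (b • f).toLin x = f.toLin ⟨(x : B) * b, h2 x x.2 b⟩ := rfl

end THom

/-!
Write `a = r B`. On the one hand `x • m` is the image of `x ∈ r B` under `b ↦ b • m`, so it lies
in `r M`; on the other hand `r` is hereditary and exact, so on the cyclic module `B m` it gives
`r (B m) = (B m) ∩ r M = (r B) m`, and every `m ∈ r M` equals `x • m` for some `x ∈ a`. Hence
`r M = a • M`, and `C` is the class of modules with `a • M = M`.

Since `a ∈ C`, also `a ⊗_ℤ M ∈ C`, so the kernel `K` of `μ : x ⊗ m ↦ x • m` lies in `C` and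
satisfies `a • K = K`. For `k ∈ K` and `x ∈ a` we have `x • k ≡ x ⊗ μ(k) = 0` modulo the
balancing relations, so `K` consists of balancing relations: `a ⊗_B M ≅ a • M`. The adjunction is
then the tensor-hom adjunction, both sides being the `B`-linear maps `a ⊗_ℤ M → M'` killing the
balancing relations.
-/

section IdealSMul

variable {a : Ideal B} {M N : Type u} [AddCommGroup M] [Module B M] [AddCommGroup N] [Module B N]

theorem idealSMul_le {Q : Submodule B M} : idealSMul a M ≤ Q ↔ ∀ x ∈ a, ∀ m : M, x • m ∈ Q := by
  rw [idealSMul, Submodule.span_le]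
  exact ⟨fun h x hx m => h ⟨x, hx, m, rfl⟩, by rintro h _ ⟨x, hx, m, rfl⟩; exact h x hx m⟩

theorem smul_mem_idealSMul {x : B} (hx : x ∈ a) (m : M) : x • m ∈ idealSMul a M :=
  Submodule.subset_span ⟨x, hx, m, rfl⟩

theorem map_idealSMul_le (f : M →ₗ[B] N) : (idealSMul a M).map f ≤ idealSMul a N := by
  rw [Submodule.map_le_iff_le_comap, idealSMul_le]
  intro x hx m
  rw [Submodule.mem_comap, map_smul]
  exact smul_mem_idealSMul hx (f m)

end IdealSMul

namespace ClosedSubcategory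

variable (C : ClosedSubcategory B) {M N : Type u} [AddCommGroup M] [Module B M]
  [AddCommGroup N] [Module B N]

theorem mem_top_iff : C.Mem (⊤ : Submodule B M) ↔ C.Mem M :=
  ⟨C.mem_congr Submodule.topEquiv, C.mem_congr Submodule.topEquiv.symm⟩

theorem mem_of_le {P Q : Submodule B M} (h : P ≤ Q) (hQ : C.Mem Q) : C.Mem P :=
  C.mem_congr (Submodule.comapSubtypeEquivOfLe h) (C.mem_submodule _ hQ)

theorem mem_map {P : Submodule B M} (hP : C.Mem P) (f : M →ₗ[B] N) : C.Mem (P.map f) := by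
  have h := C.mem_congr (f ∘ₗ P.subtype).quotKerEquivRange (C.mem_quotient _ hP)
  rwa [LinearMap.range_comp, Submodule.range_subtype] at h

structure IsAssociatedPreradical
    (r : ∀ (M : Type u) [AddCommGroup M] [Module B M], Submodule B M) : Prop where
  mem : ∀ (M : Type u) [AddCommGroup M] [Module B M], C.Mem (r M)
  le_of_mem : ∀ (M : Type u) [AddCommGroup M] [Module B M] (N : Submodule B M),
    C.Mem N → N ≤ r M

end ClosedSubcategory

def IsExactPreradical (r : ∀ (M : Type u) [AddCommGroup M] [Module B M], Submodule B M) :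
    Prop :=
  ∀ {M N : Type u} [AddCommGroup M] [Module B M] [AddCommGroup N] [Module B N]
    (f : M →ₗ[B] N), Function.Surjective f → (r M).map f = r N

namespace ClosedSubcategory.IsAssociatedPreradical

variable {C : ClosedSubcategory B} {r : ∀ (M : Type u) [AddCommGroup M] [Module B M], Submodule B M}
  {M N : Type u} [AddCommGroup M] [Module B M] [AddCommGroup N] [Module B N]

theorem map_le (hr : C.IsAssociatedPreradical r) (f : M →ₗ[B] N) : (r M).map f ≤ r N :=
  hr.le_of_mem N _ (C.mem_map (hr.mem M) f)

theorem inf_le_map_subtype (hr : C.IsAssociatedPreradical r) (N : Submodule B M) :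
    N ⊓ r M ≤ (r N).map N.subtype := by
  rw [← Submodule.map_comap_subtype]
  refine Submodule.map_mono (hr.le_of_mem N _ ?_)
  have h : C.Mem ((Submodule.comap N.subtype (r M)).map N.subtype) :=
    C.mem_of_le (by rw [Submodule.map_comap_subtype]; exact inf_le_right) (hr.mem M)
  exact C.mem_congr (Submodule.equivMapOfInjective _ N.injective_subtype _).symm h

theorem exists_smul_eq_self (hr : C.IsAssociatedPreradical r) (hexact : IsExactPreradical r)
    {m : M} (hm : m ∈ r M) : ∃ x ∈ r B, x • m = m := by
  set f := LinearMap.toSpanSingleton B M m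
  obtain ⟨n, hn, hnm⟩ := hr.inf_le_map_subtype (LinearMap.range f) ⟨⟨1, one_smul B m⟩, hm⟩
  rw [← hexact f.rangeRestrict f.surjective_rangeRestrict] at hn
  obtain ⟨x, hx, rfl⟩ := hn
  exact ⟨x, hx, hnm⟩

theorem eq_idealSMul (hr : C.IsAssociatedPreradical r) (hexact : IsExactPreradical r)
    (M : Type u) [AddCommGroup M] [Module B M] : r M = idealSMul (r B) M := by
  refine le_antisymm (fun m hm => ?_) (idealSMul_le.2 fun x hx m => ?_)
  · obtain ⟨x, hx, hxm⟩ := hr.exists_smul_eq_self hexact hm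
    exact hxm ▸ smul_mem_idealSMul hx m
  · exact hr.map_le (LinearMap.toSpanSingleton B M m) ⟨x, hx, rfl⟩

theorem mem_iff_idealSMul_eq_top (hr : C.IsAssociatedPreradical r)
    (hexact : IsExactPreradical r) (M : Type u) [AddCommGroup M] [Module B M] :
    C.Mem M ↔ idealSMul (r B) M = ⊤ := by
  rw [← hr.eq_idealSMul hexact M]
  exact ⟨fun hM => top_unique (hr.le_of_mem M ⊤ (C.mem_top_iff.2 hM)),
    fun h => C.mem_top_iff.1 (h ▸ hr.mem M)⟩

end ClosedSubcategory.IsAssociatedPreradical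

theorem idealSMul_tensor_eq_top {a : Ideal B} {M : Type u} [AddCommGroup M]
    (ha : idealSMul a ↥a = ⊤) : idealSMul a (↥a ⊗[ℤ] M) = ⊤ := by
  rw [eq_top_iff]
  rintro z -
  induction z using TensorProduct.induction_on with
  | zero => exact zero_mem _
  | tmul x m =>
    exact map_idealSMul_le ((AlgebraTensorModule.mk ℤ B a M).flip m) ⟨x, ha ▸ trivial, rfl⟩
  | add z w hz hw => exact add_mem hz hw

section Tensor

variable (a : Ideal B) (M : Type u) [AddCommGroup M] [Module B M]

noncomputable def tensorSMul : (↥a ⊗[ℤ] M) →ₗ[B] M :=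
  AlgebraTensorModule.lift
    { toFun := fun x => DistribSMul.toLinearMap ℤ M (x : B)
      map_add' := fun x y => LinearMap.ext fun m => add_smul (x : B) y m
      map_smul' := fun b x => LinearMap.ext fun m => mul_smul b (x : B) m }

/-- The relations `(x b) ⊗ m = x ⊗ (b m)` presenting `a ⊗_B M` as a quotient of `a ⊗_ℤ M`. -/
def balancingRelations : Set (↥a ⊗[ℤ] M) :=
  {z | ∃ (x p : ↥a) (b : B) (m : M), (p : B) = (x : B) * b ∧ z = p ⊗ₜ m - x ⊗ₜ (b • m)}

variable {a M}

@[simp] theorem tensorSMul_tmul (x : ↥a) (m : M) : tensorSMul a M (x ⊗ₜ m) = (x : B) • m :=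
  rfl

theorem range_tensorSMul : LinearMap.range (tensorSMul a M) = idealSMul a M := by
  refine le_antisymm ?_ (idealSMul_le.2 fun x hx m => ⟨⟨x, hx⟩ ⊗ₜ m, rfl⟩)
  rintro _ ⟨z, rfl⟩
  induction z using TensorProduct.induction_on with
  | zero => rw [map_zero]; exact zero_mem _
  | tmul x m => exact smul_mem_idealSMul x.2 m
  | add z w hz hw => rw [map_add]; exact add_mem hz hw

theorem smul_mem_balancingRelations (c : B) {z : ↥a ⊗[ℤ] M}
    (hz : z ∈ balancingRelations a M) : c • z ∈ balancingRelations a M := by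
  obtain ⟨x, p, b, m, hp, rfl⟩ := hz
  refine ⟨c • x, c • p, b, m, ?_, ?_⟩
  · simp only [Submodule.coe_smul, smul_eq_mul, hp, mul_assoc]
  · rw [smul_sub, smul_tmul', smul_tmul']

variable (a M)

def balancingSubmodule : Submodule B (↥a ⊗[ℤ] M) where
  toAddSubmonoid := (Submodule.span ℤ (balancingRelations a M)).toAddSubmonoid
  smul_mem' c z hz := by
    have h : (Submodule.span ℤ (balancingRelations a M)).map (DistribSMul.toLinearMap ℤ _ c) ≤
        Submodule.span ℤ (balancingRelations a M) :=
      (Submodule.map_span_le _ _ _).2 fun z hz =>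
        Submodule.subset_span (smul_mem_balancingRelations c hz)
    exact h ⟨z, hz, rfl⟩

variable {a M}

theorem restrictScalars_balancingSubmodule :
    (balancingSubmodule a M).restrictScalars ℤ = Submodule.span ℤ (balancingRelations a M) :=
  rfl

theorem balancingSubmodule_le_ker_iff {P : Type u} [AddCommGroup P] [Module B P]
    (G : (↥a ⊗[ℤ] M) →ₗ[B] P) :
    balancingSubmodule a M ≤ LinearMap.ker G ↔
      ∀ (x p : ↥a) (b : B) (m : M), (p : B) = (x : B) * b → G (p ⊗ₜ m) = G (x ⊗ₜ (b • m)) := by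
  rw [← Submodule.restrictScalars_le ℤ, restrictScalars_balancingSubmodule, Submodule.span_le]
  constructor
  · intro h x p b m hp
    have hrel : G (p ⊗ₜ m - x ⊗ₜ (b • m)) = 0 := h ⟨x, p, b, m, hp, rfl⟩
    rwa [map_sub, sub_eq_zero] at hrel
  · rintro h _ ⟨x, p, b, m, hp, rfl⟩
    simp only [SetLike.mem_coe, Submodule.restrictScalars_mem, LinearMap.mem_ker, map_sub,
      h x p b m hp, sub_self]

theorem balancingSubmodule_le_ker_tensorSMul :
    balancingSubmodule a M ≤ LinearMap.ker (tensorSMul a M) :=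
  (balancingSubmodule_le_ker_iff _).2 fun x p b m hp => by simp [hp, mul_smul]

theorem smul_sub_tmul_tensorSMul_mem (x : ↥a) (z : ↥a ⊗[ℤ] M) :
    (x : B) • z - x ⊗ₜ tensorSMul a M z ∈ balancingSubmodule a M := by
  induction z using TensorProduct.induction_on with
  | zero => rw [smul_zero, map_zero, tmul_zero, sub_zero]; exact zero_mem _
  | tmul y m =>
    rw [smul_tmul', tensorSMul_tmul]
    exact Submodule.subset_span ⟨x, (x : B) • y, y, m, rfl, rfl⟩
  | add z w hz hw =>
    convert add_mem hz hw using 1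
    rw [smul_add, map_add, tmul_add]
    abel

theorem ker_tensorSMul_le_of_idealSMul_eq_top
    (h : idealSMul a (LinearMap.ker (tensorSMul a M)) = ⊤) :
    LinearMap.ker (tensorSMul a M) ≤ balancingSubmodule a M := by
  intro k hk
  have hk' : (⟨k, hk⟩ : LinearMap.ker (tensorSMul a M)) ∈ idealSMul a _ := h ▸ Submodule.mem_top
  refine (idealSMul_le (Q := (balancingSubmodule a M).comap (Submodule.subtype _))).2 ?_ hk'
  rintro x hx ⟨k', hk'⟩
  have hxk' := smul_sub_tmul_tensorSMul_mem ⟨x, hx⟩ k'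
  rwa [LinearMap.mem_ker.1 hk', tmul_zero, sub_zero] at hxk'

end Tensor

theorem ClosedSubcategory.IsAssociatedPreradical.ker_tensorSMul {C : ClosedSubcategory B}
    {r : ∀ (M : Type u) [AddCommGroup M] [Module B M], Submodule B M}
    (hr : C.IsAssociatedPreradical r) (hexact : IsExactPreradical r)
    (M : Type u) [AddCommGroup M] [Module B M] :
    LinearMap.ker (tensorSMul (r B) M) = balancingSubmodule (r B) M := by
  have hC := hr.mem_iff_idealSMul_eq_top hexact
  have haM : C.Mem (↥(r B) ⊗[ℤ] M) := (hC _).2 (idealSMul_tensor_eq_top ((hC _).1 (hr.mem B)))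
  exact le_antisymm (ker_tensorSMul_le_of_idealSMul_eq_top ((hC _).1 (C.mem_submodule _ haM)))
    balancingSubmodule_le_ker_tensorSMul

theorem LinearMap.exists_comp_eq_of_ker_le {R T P Q : Type*} [Ring R] [AddCommGroup T]
    [Module R T] [AddCommGroup P] [Module R P] [AddCommGroup Q] [Module R Q] {π : T →ₗ[R] P}
    (hπ : Function.Surjective π) {G : T →ₗ[R] Q} (h : LinearMap.ker π ≤ LinearMap.ker G) :
    ∃ g : P →ₗ[R] Q, g ∘ₗ π = G :=
  ⟨(LinearMap.ker π).liftQ G h ∘ₗ (π.quotKerEquivOfSurjective hπ).symm.toLinearMap,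
    LinearMap.ext fun z => by simp⟩

section Adjunction

variable {a : Ideal B} (h2 : ∀ x ∈ a, ∀ b : B, x * b ∈ a) {M M' : Type u} [AddCommGroup M]
  [Module B M] [AddCommGroup M'] [Module B M']

variable (a M) in
noncomputable def tensorToIdealSMul : (↥a ⊗[ℤ] M) →ₗ[B] idealSMul a M :=
  (tensorSMul a M).codRestrict _ fun z =>
    range_tensorSMul (a := a) (M := M) ▸ LinearMap.mem_range_self _ z

theorem tensorToIdealSMul_surjective : Function.Surjective (tensorToIdealSMul a M) := by
  rintro ⟨y, hy⟩
  rw [← range_tensorSMul] at hy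
  obtain ⟨z, rfl⟩ := hy
  exact ⟨z, rfl⟩

theorem ker_tensorToIdealSMul :
    LinearMap.ker (tensorToIdealSMul a M) = LinearMap.ker (tensorSMul a M) :=
  LinearMap.ker_codRestrict _ _ _

def curryTHom (G : (↥a ⊗[ℤ] M) →ₗ[B] M') (hG : balancingSubmodule a M ≤ LinearMap.ker G) :
    M →ₗ[B] THom a h2 M' where
  toFun m := G ∘ₗ (AlgebraTensorModule.mk ℤ B a M).flip m
  map_add' m m' := THom.ext' fun x => by
    show G (x ⊗ₜ (m + m')) = G (x ⊗ₜ m) + G (x ⊗ₜ m')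
    rw [tmul_add, map_add]
  map_smul' b m := THom.ext' fun x =>
    ((balancingSubmodule_le_ker_iff G).1 hG x ⟨(x : B) * b, h2 x x.2 b⟩ b m rfl).symm

noncomputable def uncurryTHom (φ : M →ₗ[B] THom a h2 M') : (↥a ⊗[ℤ] M) →ₗ[B] M' :=
  AlgebraTensorModule.lift
    { toFun := fun x =>
        { toFun := fun m => (φ m).toLin x
          map_add' := fun m m' => by rw [map_add]; rfl
          map_smul' := fun n m => by rw [map_zsmul]; rfl }
      map_add' := fun x y => LinearMap.ext fun m => map_add (φ m).toLin x y
      map_smul' := fun b x => LinearMap.ext fun m => map_smul (φ m).toLin b x }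

theorem balancingSubmodule_le_ker_uncurryTHom (φ : M →ₗ[B] THom a h2 M') :
    balancingSubmodule a M ≤ LinearMap.ker (uncurryTHom h2 φ) := by
  refine (balancingSubmodule_le_ker_iff _).2 fun x p b m hp => ?_
  show (φ m).toLin p = (φ (b • m)).toLin x
  rw [map_smul, THom.smul_apply]
  exact congrArg (φ m).toLin (Subtype.ext hp)

theorem exists_homEquiv (hker : LinearMap.ker (tensorSMul a M) ≤ balancingSubmodule a M) :
    ∃ e : (↥(idealSMul a M) →ₗ[B] M') ≃ (M →ₗ[B] THom a h2 M'),
      ∀ (g : ↥(idealSMul a M) →ₗ[B] M') (m : M) (x : ↥a),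
        ((e g) m).toLin x = g ⟨(x : B) • m, Submodule.subset_span ⟨(x : B), x.2, m, rfl⟩⟩ := by
  have hker' : LinearMap.ker (tensorToIdealSMul a M) = balancingSubmodule a M := by
    rw [ker_tensorToIdealSMul]
    exact le_antisymm hker balancingSubmodule_le_ker_tensorSMul
  let Φ (g : ↥(idealSMul a M) →ₗ[B] M') : M →ₗ[B] THom a h2 M' :=
    curryTHom h2 (g ∘ₗ tensorToIdealSMul a M) (hker' ▸ LinearMap.ker_le_ker_comp _ g)
  refine ⟨Equiv.ofBijective Φ ⟨fun g g' hgg' => ?_, fun φ => ?_⟩, fun g m x => rfl⟩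
  · refine (LinearMap.cancel_right tensorToIdealSMul_surjective).1 ?_
    exact AlgebraTensorModule.ext fun x m => congrArg (fun φ => (φ m).toLin x) hgg'
  · obtain ⟨g, hg⟩ := LinearMap.exists_comp_eq_of_ker_le tensorToIdealSMul_surjective
      (hker'.le.trans (balancingSubmodule_le_ker_uncurryTHom h2 φ))
    exact ⟨g, LinearMap.ext fun m => THom.ext' fun x => LinearMap.congr_fun hg (x ⊗ₜ m)⟩

end Adjunction

theorem stmt16 (C : ClosedSubcategory B)
    (r : ∀ (M : Type u) [AddCommGroup M] [Module B M], Submodule B M)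
    (hmem : ∀ (M : Type u) [AddCommGroup M] [Module B M], C.Mem (r M))
    (hmax : ∀ (M : Type u) [AddCommGroup M] [Module B M] (N : Submodule B M),
      C.Mem N → N ≤ r M)
    (hexact : ∀ {M N : Type u} [AddCommGroup M] [Module B M] [AddCommGroup N] [Module B N]
      (f : M →ₗ[B] N), Function.Surjective f → (r M).map f = r N)
    -- (automatic) two-sidedness of `a = r B`:
    (h2 : ∀ x ∈ r B, ∀ b : B, x * b ∈ r B) :
    -- (1) `C` is exactly the class of modules with `M·a = M`:
    (∀ (M : Type u) [AddCommGroup M] [Module B M],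
        C.Mem M ↔ idealSMul (r B) M = ⊤) ∧
    -- (2) the canonical map `a ⊗_B M → M` is an isomorphism onto `a•M`, i.e. the map
    -- `a ⊗_ℤ M → M` has image `a•M` and kernel the balancing relations:
    (∀ (M : Type u) [AddCommGroup M] [Module B M]
        (μ : (↥(r B) ⊗[ℤ] M) →ₗ[ℤ] M),
        (∀ (x : ↥(r B)) (m : M), μ (x ⊗ₜ m) = (x : B) • m) →
          Set.range μ = (idealSMul (r B) M : Set M) ∧
            LinearMap.ker μ =
              Submodule.span ℤ
                {z : ↥(r B) ⊗[ℤ] M | ∃ (x p : ↥(r B)) (b : B) (m : M),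
                  (p : B) = (x : B) * b ∧ z = p ⊗ₜ m - x ⊗ₜ (b • m)}) ∧
    -- (3) the adjunction `(-·a) ⊣ Hom_B(a, -)`, via the canonical natural bijections:
    (∀ (M : Type u) [AddCommGroup M] [Module B M] (M' : Type u) [AddCommGroup M']
        [Module B M'], C.Mem M' →
        ∃ e : (↥(idealSMul (r B) M) →ₗ[B] M') ≃ (M →ₗ[B] THom (r B) h2 M'),
          ∀ (g : ↥(idealSMul (r B) M) →ₗ[B] M') (m : M) (x : ↥(r B)),
            ((e g) m).toLin x =
              g ⟨(x : B) • m, Submodule.subset_span ⟨(x : B), x.2, m, rfl⟩⟩) := by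
  have hr : C.IsAssociatedPreradical r := ⟨hmem, hmax⟩
  have hker := hr.ker_tensorSMul @hexact
  refine ⟨hr.mem_iff_idealSMul_eq_top @hexact, fun M _ _ μ hμ => ?_,
    fun M _ _ M' _ _ _ => exists_homEquiv h2 (hker M).le⟩
  obtain rfl : μ = (tensorSMul (r B) M).restrictScalars ℤ := TensorProduct.ext' hμ
  refine ⟨?_, ?_⟩
  · rw [LinearMap.coe_restrictScalars, ← LinearMap.coe_range, range_tensorSMul]
  · rw [LinearMap.ker_restrictScalars, hker M, restrictScalars_balancingSubmodule]
    rfl
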